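/- arXiv:2106.01868 — 4 statements merged into one kernel-verified Lean document; each statement's English description precedes it below -/
import Mathlib

section
/- Let 𝒜 be a skeletally small abelian category and let X be an object of 𝒜 which is subobject cocomplete. Then there exists a lower composition series of X. Moreover, for any pre-subobject chain Δ of X: (1) if Δ admits no proper refinement (i.e., Δ is not a proper subset of any larger totally ordered set of subobjects of X), then Δ is a lower composition series; (2) there exists a lower composition series Δ' of X with Δ ⊆ Δ'. The same statements hold with 'subobject cocomplete' replaced by 'subobject complete' and 'lower composition series' replaced by 'upper composition series'. -/
open CategoryTheory CategoryTheory.Limits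

universe w v u

namespace JHS

variable {𝒜 : Type u} [Category.{v} 𝒜] [Abelian 𝒜]

variable {X : 𝒜}

/-- The diagram in `𝒜` associated to a set of subobjects of `X`, given by the underlying
objects and the canonical inclusion monomorphisms between them. -/
@[simps]
noncomputable def chainDiagram (Δ : Set (Subobject X)) : Δ ⥤ 𝒜 where
  obj Y := (Y.1 : 𝒜)
  map {Y Z} f := Subobject.ofLE Y.1 Z.1 (leOfHom f)
  map_id Y := Subobject.ofLE_refl Y.1
  map_comp {Y Z W} f g := (Subobject.ofLE_comp_ofLE Y.1 Z.1 W.1 (leOfHom f) (leOfHom g)).symm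

/-- The cocone over the diagram of a set of subobjects of `X` with vertex an upper bound. -/
@[simps]
noncomputable def chainCocone (Δ : Set (Subobject X)) (W : Subobject X) (h : ∀ Y ∈ Δ, Y ≤ W) :
    Cocone (chainDiagram Δ) where
  pt := (W : 𝒜)
  ι :=
    { app := fun Y => Subobject.ofLE Y.1 W (h Y.1 Y.2)
      naturality := fun Y Z f => by
        simp [chainDiagram, Subobject.ofLE_comp_ofLE] }

/-- The cone over the diagram of a set of subobjects of `X` with vertex a lower bound. -/
@[simps]
noncomputable def chainCone (Δ : Set (Subobject X)) (W : Subobject X) (h : ∀ Y ∈ Δ, W ≤ Y) :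
    Cone (chainDiagram Δ) where
  pt := (W : 𝒜)
  π :=
    { app := fun Y => Subobject.ofLE W Y.1 (h Y.1 Y.2)
      naturality := fun Y Z f => by
        simp [chainDiagram, Subobject.ofLE_comp_ofLE] }

/-- `W` is the colimit of the chain `Δ` of subobjects of `X`, as a subobject of `X`:
the colimit of the diagram of inclusions exists and the induced morphism to `X` is a
monomorphism with image `W`.  Equivalently, the canonical cocone with vertex `W` is a
colimit cocone. -/
def IsColimSub (Δ : Set (Subobject X)) (W : Subobject X) : Prop :=
  ∃ h : ∀ Y ∈ Δ, Y ≤ W, Nonempty (IsColimit (chainCocone Δ W h))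

/-- `W` is the limit of the chain `Δ` of subobjects of `X` (such a limit is automatically a
subobject of `X`): the canonical cone with vertex `W` is a limit cone. -/
def IsLimSub (Δ : Set (Subobject X)) (W : Subobject X) : Prop :=
  ∃ h : ∀ Y ∈ Δ, W ≤ Y, Nonempty (IsLimit (chainCone Δ W h))

/-- A pre-subobject chain: a set of subobjects totally ordered under inclusion. -/
def IsPreChain (Δ : Set (Subobject X)) : Prop :=
  IsChain (· ≤ ·) Δ

/-- A subobject chain: a pre-subobject chain containing `⊥ = 0` and `⊤ = X`. -/
def IsSubChain (Δ : Set (Subobject X)) : Prop :=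
  IsPreChain Δ ∧ ⊥ ∈ Δ ∧ ⊤ ∈ Δ

/-- A chain is cocomplete if every subset has a colimit which is a subobject of `X` and
lies in the chain. -/
def Cocomplete (Δ : Set (Subobject X)) : Prop :=
  ∀ Δ' ⊆ Δ, ∃ W ∈ Δ, IsColimSub Δ' W

/-- A chain is complete if every subset has a limit which lies in the chain. -/
def Complete (Δ : Set (Subobject X)) : Prop :=
  ∀ Δ' ⊆ Δ, ∃ W ∈ Δ, IsLimSub Δ' W

/-- A chain is bicomplete if it is both cocomplete and complete. -/
def Bicomplete (Δ : Set (Subobject X)) : Prop :=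
  Cocomplete Δ ∧ Complete Δ

/-- `W = Y⁻_Δ` is the predecessor of `Y` in `Δ`: the colimit of `{Z ∈ Δ | Z ⊊ Y}`,
with the convention `0⁻_Δ = 0`. -/
def IsPred (Δ : Set (Subobject X)) (Y W : Subobject X) : Prop :=
  (Y = ⊥ ∧ W = ⊥) ∨ (Y ≠ ⊥ ∧ IsColimSub {Z | Z ∈ Δ ∧ Z < Y} W)

/-- `W = Y⁺_Δ` is the successor of `Y` in `Δ`: the limit of `{Z ∈ Δ | Y ⊊ Z}`,
with the convention `X⁺_Δ = X`. -/
def IsSucc (Δ : Set (Subobject X)) (Y W : Subobject X) : Prop :=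
  (Y = ⊤ ∧ W = ⊤) ∨ (Y ≠ ⊤ ∧ IsLimSub {Z | Z ∈ Δ ∧ Y < Z} W)

/-- The quotient (subfactor) `Y/W` of two nested subobjects of `X`: the cokernel of the
inclusion `W → Y`. -/
noncomputable def quot (W Y : Subobject X) (h : W ≤ Y) : 𝒜 :=
  cokernel (Subobject.ofLE W Y h)

/-- A composition series of `X`: a bicomplete subobject chain all of whose subfactors
`Y/Y⁻_Δ` (for `Y ∈ Δ` with `Y ≠ Y⁻_Δ`) are simple. -/
def IsCompSeries (Δ : Set (Subobject X)) : Prop :=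
  IsSubChain Δ ∧ Bicomplete Δ ∧
    ∀ Y ∈ Δ, ∀ (W) (h : W ≤ Y), IsPred Δ Y W → W ≠ Y → Simple (quot W Y h)

variable (X) in
/-- Axiom (JHS1): `X` is subobject cocomplete. -/
def JHS1 : Prop :=
  ∀ Δ : Set (Subobject X), IsPreChain Δ → ∃ W, IsColimSub Δ W

variable (X) in
/-- Axiom (JHS2): `X` is subobject complete. -/
def JHS2 : Prop :=
  ∀ Δ : Set (Subobject X), IsPreChain Δ → ∃ W, IsLimSub Δ W

variable (X) in
/-- Axiom (JHS3). -/
def JHS3 : Prop :=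
  JHS1 X ∧ ∀ (Δ : Set (Subobject X)) (Z W : Subobject X),
    IsPreChain Δ → IsColimSub Δ W → IsColimSub ((· ⊓ Z) '' Δ) (W ⊓ Z)

variable (X) in
/-- Axiom (JHS4). -/
def JHS4 : Prop :=
  JHS2 X ∧ ∀ (Δ : Set (Subobject X)) (Z W : Subobject X),
    IsPreChain Δ → IsLimSub Δ W → IsLimSub ((· ⊔ Z) '' Δ) (W ⊔ Z)

variable (X) in
/-- `X` is weakly Jordan–Hölder–Schreier. -/
def WeaklyJHS : Prop :=
  JHS3 X ∧ JHS4 X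

variable (X) in
/-- Axiom (JHS5): if `X ≠ 0`, every composition series of `X` has a nonempty subfactor
multiset. -/
def JHS5 : Prop :=
  ¬ IsZero X → ∀ Δ : Set (Subobject X), IsCompSeries Δ →
    ∃ Y ∈ Δ, ∃ W, IsPred Δ Y W ∧ W ≠ Y

variable (X) in
/-- `X` is Jordan–Hölder–Schreier. -/
def IsJHS : Prop :=
  WeaklyJHS X ∧ JHS5 X

/-- The index set of the lower subfactor multiset `sf⁻(Δ)`: elements `Y ∈ Δ` admitting a
predecessor `Y⁻_Δ ≠ Y`. -/
def lowerIdx (Δ : Set (Subobject X)) : Type _ :=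
  {Y : Subobject X // Y ∈ Δ ∧ ∃ W, IsPred Δ Y W ∧ W ≠ Y}

/-- The index set of the upper subfactor multiset `sf⁺(Δ)`: elements `Y ∈ Δ` admitting a
successor `Y⁺_Δ ≠ Y`. -/
def upperIdx (Δ : Set (Subobject X)) : Type _ :=
  {Y : Subobject X // Y ∈ Δ ∧ ∃ W, IsSucc Δ Y W ∧ W ≠ Y}

/-- Subfactor equivalence of two chains: a bijection of the index sets of their subfactor
multisets under which corresponding subfactors are isomorphic. -/
def SubfactorEquiv (Δ Γ : Set (Subobject X)) : Prop :=
  ∃ e : lowerIdx Δ ≃ lowerIdx Γ,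
    ∀ (Y : lowerIdx Δ) (W : Subobject X) (hW : W ≤ Y.1) (V : Subobject X)
      (hV : V ≤ (e Y).1),
      IsPred Δ Y.1 W → IsPred Γ (e Y).1 V →
      Nonempty (quot W Y.1 hW ≅ quot V (e Y).1 hV)

/-- The lower conflation `con⁻(Δ, Γ)`. -/
def conLower (Δ Γ : Set (Subobject X)) : Set (Subobject X) :=
  Δ ∪ {V | ∃ Y ∈ Δ, ∃ Z ∈ Γ, ∃ W, IsPred Δ Y W ∧ V = W ⊔ (Y ⊓ Z)}

/-- The upper conflation `con⁺(Δ, Γ)`. -/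
def conUpper (Δ Γ : Set (Subobject X)) : Set (Subobject X) :=
  Δ ∪ {V | ∃ Y ∈ Δ, ∃ Z ∈ Γ, ∃ W, IsSucc Δ Y W ∧ V = Y ⊔ (W ⊓ Z)}

/-- A lower composition series: a cocomplete subobject chain all of whose lower subfactors
`Y/Y⁻_Δ` (for `Y ∈ Δ` with `Y ≠ Y⁻_Δ`) are simple. -/
def IsLowerCompSeries (Δ : Set (Subobject X)) : Prop :=
  IsSubChain Δ ∧ Cocomplete Δ ∧
    ∀ Y ∈ Δ, ∀ (W) (h : W ≤ Y), IsPred Δ Y W → W ≠ Y → Simple (quot W Y h)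

/-- An upper composition series: a complete subobject chain all of whose upper subfactors
`Y⁺_Δ/Y` (for `Y ∈ Δ` with `Y ≠ Y⁺_Δ`) are simple. -/
def IsUpperCompSeries (Δ : Set (Subobject X)) : Prop :=
  IsSubChain Δ ∧ Complete Δ ∧
    ∀ Y ∈ Δ, ∀ (W) (h : Y ≤ W), IsSucc Δ Y W → W ≠ Y → Simple (quot Y W h)

end JHS

/-!
A maximal chain of subobjects (a flag; by Zorn's lemma flags exist and extend any chain) is a
composition series.  A flag contains every element comparable with all of its members, so it
contains `0`, `X`, and the colimit (resp. limit) of any of its subsets, which is the supremum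
(resp. infimum) of that subset.  For the same reason nothing lies strictly between `Y⁻` and `Y`
(resp. `Y` and `Y⁺`), and the cokernel of a covering pair `W ⋖ Y` is simple: the pullback of a
subobject of `Y/W` along `Y → Y/W` is an intermediate subobject, so it is `W` or `Y`.
-/

section Flag

variable {α : Type*} [PartialOrder α]

theorem Flag.mem_of_isLUB (s : Flag α) {t : Set α} (hts : t ⊆ s) {a : α} (ha : IsLUB t a) :
    a ∈ s := by
  refine Flag.mem_iff_forall_le_or_ge.2 fun b hb => ?_
  by_cases htb : b ∈ upperBounds t
  · exact .inl (ha.2 htb)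
  · obtain ⟨c, hc, hcb⟩ := Set.not_subset.1 htb
    exact .inr (((s.le_or_le (hts hc) hb).resolve_left hcb).trans (ha.1 hc))

theorem Flag.mem_of_isGLB (s : Flag α) {t : Set α} (hts : t ⊆ s) {a : α} (ha : IsGLB t a) :
    a ∈ s := by
  refine Flag.mem_iff_forall_le_or_ge.2 fun b hb => ?_
  by_cases htb : b ∈ lowerBounds t
  · exact .inr (ha.2 htb)
  · obtain ⟨c, hc, hcb⟩ := Set.not_subset.1 htb
    exact .inl ((ha.1 hc).trans ((s.le_or_le (hts hc) hb).resolve_right hcb))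

theorem Flag.covBy_of_forall_lt_le (s : Flag α) {w y : α} (hy : y ∈ s)
    (hwy : w < y) (h : ∀ z ∈ s, z < y → z ≤ w) : w ⋖ y := by
  refine ⟨hwy, fun c hwc hcy => hwc.not_ge (h c ?_ hcy)⟩
  refine Flag.mem_iff_forall_le_or_ge.2 fun z hz => ?_
  by_cases hzy : z < y
  · exact .inr ((h z hz hzy).trans hwc.le)
  · exact .inl (hcy.le.trans (s.chain_le.le_of_not_gt hz hy hzy))

theorem Flag.covBy_of_forall_lt_ge (s : Flag α) {y w : α} (hy : y ∈ s)
    (hyw : y < w) (h : ∀ z ∈ s, y < z → w ≤ z) : y ⋖ w := by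
  refine ⟨hyw, fun c hyc hcw => hcw.not_ge (h c ?_ hyc)⟩
  refine Flag.mem_iff_forall_le_or_ge.2 fun z hz => ?_
  by_cases hyz : y < z
  · exact .inl (hcw.le.trans (h z hz hyz))
  · exact .inr ((s.chain_le.le_of_not_gt hy hz hyz).trans hyc.le)

end Flag

namespace JHS

variable {𝒜 : Type u} [Category.{v} 𝒜] {X : 𝒜}

theorem IsColimSub.isLUB {Δ : Set (Subobject X)} {W : Subobject X} (hW : IsColimSub Δ W) :
    IsLUB Δ W := by
  obtain ⟨hub, ⟨c⟩⟩ := hW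
  refine ⟨hub, fun Z hZ => ?_⟩
  rw [mem_upperBounds] at hZ
  obtain ⟨g, hg⟩ : ∃ g : (W : 𝒜) ⟶ Z,
      ∀ Y : Δ, Y.1.ofLE W (hub Y.1 Y.2) ≫ g = Y.1.ofLE Z (hZ Y.1 Y.2) :=
    ⟨c.desc (chainCocone Δ Z hZ), c.fac (chainCocone Δ Z hZ)⟩
  refine Subobject.le_of_comm g (c.hom_ext fun Y => ?_)
  change Y.1.ofLE W _ ≫ g ≫ Z.arrow = Y.1.ofLE W _ ≫ W.arrow
  rw [reassoc_of% hg Y]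
  simp

theorem IsLimSub.isGLB {Δ : Set (Subobject X)} {W : Subobject X} (hW : IsLimSub Δ W)
    (hΔ : Δ.Nonempty) : IsGLB Δ W := by
  obtain ⟨hlb, ⟨c⟩⟩ := hW
  obtain ⟨Y, hY⟩ := hΔ
  refine ⟨hlb, fun Z hZ => ?_⟩
  rw [mem_lowerBounds] at hZ
  obtain ⟨g, hg⟩ : ∃ g : (Z : 𝒜) ⟶ W, g ≫ W.ofLE Y (hlb Y hY) = Z.ofLE Y (hZ Y hY) :=
    ⟨c.lift (chainCone Δ Z hZ), c.fac (chainCone Δ Z hZ) ⟨Y, hY⟩⟩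
  refine Subobject.le_of_comm g ?_
  rw [← Subobject.ofLE_arrow (hlb Y hY), reassoc_of% hg, Subobject.ofLE_arrow]

variable [Abelian 𝒜]

theorem isLimSub_empty : IsLimSub (∅ : Set (Subobject X)) ⊥ :=
  ⟨fun _ h => h.elim, ⟨{ lift := fun _ => 0
                         fac := fun _ j => j.2.elim
                         uniq := fun _ _ _ =>
                           ((isZero_zero 𝒜).of_iso Subobject.botCoeIsoZero).eq_of_tgt _ _ }⟩⟩

theorem eq_of_isZero_cokernel_ofLE {W Y : Subobject X} (h : W ≤ Y)
    (hQ : IsZero (cokernel (W.ofLE Y h))) : W = Y := by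
  have : Epi (W.ofLE Y h) := Preadditive.epi_of_cokernel_zero (hQ.eq_of_tgt _ _)
  have : IsIso (W.ofLE Y h) := isIso_of_mono_of_epi _
  exact Subobject.eq_of_comm (asIso (W.ofLE Y h)) (Subobject.ofLE_arrow h)

theorem simple_cokernel_ofLE_of_covBy {W Y : Subobject X} (hWY : W ⋖ Y) :
    Simple (cokernel (W.ofLE Y hWY.le)) := by
  constructor
  intro A f _
  constructor
  · intro _ hf
    subst hf
    exact hWY.ne (eq_of_isZero_cokernel_ofLE hWY.le (IsZero.of_epi_zero A _))
  intro hf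
  let i := W.ofLE Y hWY.le
  let π : (Y : 𝒜) ⟶ cokernel i := cokernel.π i
  have hVY : Subobject.mk (pullback.snd f π ≫ Y.arrow) ≤ Y :=
    Subobject.mk_le_of_comm (pullback.snd f π) rfl
  have hWV : W ≤ Subobject.mk (pullback.snd f π ≫ Y.arrow) :=
    Subobject.le_mk_of_comm (pullback.lift 0 i (by simp [π]))
      (by rw [pullback.lift_snd_assoc, Subobject.ofLE_arrow])
  rcases hWY.eq_or_eq hWV hVY with hVW | hVY
  · obtain ⟨k, hk⟩ : ∃ k, k ≫ i = pullback.snd f π :=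
      ⟨Subobject.ofMkLE _ W hVW.le, by simp [← cancel_mono Y.arrow, i]⟩
    refine absurd ((cancel_epi (pullback.fst f π)).1 ?_) hf
    rw [pullback.condition, ← hk]
    simp [π]
  · have : IsSplitEpi (pullback.snd f π) :=
      ⟨⟨Subobject.ofLEMk Y _ hVY.ge, by simp [← cancel_mono Y.arrow]⟩⟩
    have : Epi (pullback.fst f π ≫ f) := by
      rw [pullback.condition]
      exact epi_comp _ _
    have : Epi f := epi_of_epi (pullback.fst f π) f
    exact isIso_of_mono_of_epi f

theorem isLowerCompSeries_flag (hJ : JHS1 X) (s : Flag (Subobject X)) :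
    IsLowerCompSeries (s : Set (Subobject X)) := by
  refine ⟨⟨s.chain_le, s.bot_mem, s.top_mem⟩, fun Δ hΔ => ?_, ?_⟩
  · obtain ⟨W, hW⟩ := hJ Δ (s.chain_le.mono hΔ)
    exact ⟨W, s.mem_of_isLUB hΔ hW.isLUB, hW⟩
  · rintro Y hY W h (⟨rfl, rfl⟩ | ⟨-, hW⟩) hWY
    · exact absurd rfl hWY
    · exact simple_cokernel_ofLE_of_covBy <| s.covBy_of_forall_lt_le hY (h.lt_of_ne hWY)
        fun Z hZ hZY => hW.isLUB.1 ⟨hZ, hZY⟩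

theorem isUpperCompSeries_flag (hJ : JHS2 X) (s : Flag (Subobject X)) :
    IsUpperCompSeries (s : Set (Subobject X)) := by
  refine ⟨⟨s.chain_le, s.bot_mem, s.top_mem⟩, fun Δ hΔ => ?_, ?_⟩
  · -- the limit of the empty diagram is the zero object `⊥`, not the infimum `⊤` of `∅`
    rcases Δ.eq_empty_or_nonempty with rfl | hne
    · exact ⟨⊥, s.bot_mem, isLimSub_empty⟩
    obtain ⟨W, hW⟩ := hJ Δ (s.chain_le.mono hΔ)
    exact ⟨W, s.mem_of_isGLB hΔ (hW.isGLB hne), hW⟩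
  · rintro Y hY W h (⟨rfl, rfl⟩ | ⟨-, hW⟩) hWY
    · exact absurd rfl hWY
    · obtain ⟨hlb, -⟩ := hW
      exact simple_cokernel_ofLE_of_covBy <| s.covBy_of_forall_lt_ge hY (h.lt_of_ne hWY.symm)
        fun Z hZ hYZ => hlb Z ⟨hZ, hYZ⟩

theorem statement7_general (X : 𝒜) :
    (JHS1 X →
      (∃ Δ : Set (Subobject X), IsLowerCompSeries Δ) ∧
      ∀ Δ : Set (Subobject X), IsPreChain Δ →
        ((∀ Δ'' : Set (Subobject X), IsPreChain Δ'' → Δ ⊆ Δ'' → Δ = Δ'') →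
            IsLowerCompSeries Δ) ∧
          ∃ Δ' : Set (Subobject X), IsLowerCompSeries Δ' ∧ Δ ⊆ Δ') ∧
    (JHS2 X →
      (∃ Δ : Set (Subobject X), IsUpperCompSeries Δ) ∧
      ∀ Δ : Set (Subobject X), IsPreChain Δ →
        ((∀ Δ'' : Set (Subobject X), IsPreChain Δ'' → Δ ⊆ Δ'' → Δ = Δ'') →
            IsUpperCompSeries Δ) ∧
          ∃ Δ' : Set (Subobject X), IsUpperCompSeries Δ' ∧ Δ ⊆ Δ') := by
  refine ⟨fun hJ => ⟨?_, fun Δ hΔ => ⟨fun hmax => ?_, ?_⟩⟩,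
    fun hJ => ⟨?_, fun Δ hΔ => ⟨fun hmax => ?_, ?_⟩⟩⟩
  · exact ⟨_, isLowerCompSeries_flag hJ (Classical.arbitrary _)⟩
  · exact isLowerCompSeries_flag hJ (.ofIsMaxChain Δ ⟨hΔ, fun t ht hΔt => hmax t ht hΔt⟩)
  · obtain ⟨s, hs⟩ := hΔ.exists_subset_flag
    exact ⟨s, isLowerCompSeries_flag hJ s, hs⟩
  · exact ⟨_, isUpperCompSeries_flag hJ (Classical.arbitrary _)⟩
  · exact isUpperCompSeries_flag hJ (.ofIsMaxChain Δ ⟨hΔ, fun t ht hΔt => hmax t ht hΔt⟩)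
  · obtain ⟨s, hs⟩ := hΔ.exists_subset_flag
    exact ⟨s, isUpperCompSeries_flag hJ s, hs⟩

/-- Proposition 3.14: existence of lower (respectively upper) composition series for
subobject cocomplete (respectively complete) objects. -/
theorem statement7 [EssentiallySmall.{w} 𝒜] (X : 𝒜) :
    (JHS1 X →
      (∃ Δ : Set (Subobject X), IsLowerCompSeries Δ) ∧
      ∀ Δ : Set (Subobject X), IsPreChain Δ →
        ((∀ Δ'' : Set (Subobject X), IsPreChain Δ'' → Δ ⊆ Δ'' → Δ = Δ'') →
            IsLowerCompSeries Δ) ∧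
          ∃ Δ' : Set (Subobject X), IsLowerCompSeries Δ' ∧ Δ ⊆ Δ') ∧
    (JHS2 X →
      (∃ Δ : Set (Subobject X), IsUpperCompSeries Δ) ∧
      ∀ Δ : Set (Subobject X), IsPreChain Δ →
        ((∀ Δ'' : Set (Subobject X), IsPreChain Δ'' → Δ ⊆ Δ'' → Δ = Δ'') →
            IsUpperCompSeries Δ) ∧
          ∃ Δ' : Set (Subobject X), IsUpperCompSeries Δ' ∧ Δ ⊆ Δ') :=
  statement7_general X

end JHS
end

section
/- Let 𝒜 be a skeletally small abelian category, let X be a subobject bicomplete object of 𝒜, and let Δ be a subobject chain of X. Then the set Δ̄ = {colim Γ : Γ ⊆ Δ} ∪ {lim Γ : Γ ⊆ Δ} is a bicomplete subobject chain of X which refines Δ, and every bicomplete subobject chain Δ' of X refining Δ also refines Δ̄ (i.e., Δ̄ ⊆ Δ'). The analogous statement holds with 'bicomplete' replaced throughout by 'cocomplete' (taking Δ̄ = {colim Γ : Γ ⊆ Δ}) and with 'bicomplete' replaced throughout by 'complete' (taking Δ̄ = {lim Γ : Γ ⊆ Δ}), with 'subobject bicomplete' replaced by 'subobject cocomplete'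 and 'subobject complete' respectively. -/
/-!
Colimits of subobject chains are least upper bounds in the lattice `Subobject X`, limits of
nonempty ones are greatest lower bounds, and under (JHS1) resp. (JHS2) every such bound of a
pre-subobject chain is realised by a colimit resp. limit. The proposition thus becomes order
theory: suprema and infima of subsets of a chain `Δ` are comparable with every element of `Δ`,
hence form a chain, and a supremum `a` of such suprema and infima is either one of them or the
supremum of `{y ∈ Δ | y ≤ a}`; dually for infima.
-/

open CategoryTheory CategoryTheory.Limits

universe w v u

namespace JHS

variable {𝒜 : Type u} [Category.{v} 𝒜] [Abelian 𝒜]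

variable {X : 𝒜}

section OrderTheory

variable {α : Type*} [PartialOrder α] {Δ Γ D : Set α} {a b : α}

def lubsOf (Δ : Set α) : Set α :=
  {a | ∃ Γ ⊆ Δ, IsLUB Γ a}

def glbsOf (Δ : Set α) : Set α :=
  {a | ∃ Γ ⊆ Δ, IsGLB Γ a}

theorem subset_lubsOf : Δ ⊆ lubsOf Δ :=
  fun y hy => ⟨{y}, Set.singleton_subset_iff.2 hy, isLUB_singleton⟩

theorem subset_glbsOf : Δ ⊆ glbsOf Δ :=
  fun y hy => ⟨{y}, Set.singleton_subset_iff.2 hy, isGLB_singleton⟩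

theorem le_or_le_of_isLUB (ha : IsLUB Γ a) (hb : ∀ y ∈ Γ, y ≤ b ∨ b ≤ y) :
    a ≤ b ∨ b ≤ a := by
  by_cases h : ∀ y ∈ Γ, y ≤ b
  · exact .inl (ha.2 h)
  push Not at h
  obtain ⟨y, hy, hyb⟩ := h
  exact .inr (((hb y hy).resolve_left hyb).trans (ha.1 hy))

theorem le_or_le_of_isGLB (ha : IsGLB Γ a) (hb : ∀ y ∈ Γ, y ≤ b ∨ b ≤ y) :
    a ≤ b ∨ b ≤ a :=
  (le_or_le_of_isLUB (α := αᵒᵈ) ha fun y hy => (hb y hy).symm).symm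

theorem le_or_le_of_mem_lubsOf_union_glbsOf (ha : a ∈ lubsOf Δ ∪ glbsOf Δ)
    (hb : ∀ y ∈ Δ, y ≤ b ∨ b ≤ y) : a ≤ b ∨ b ≤ a := by
  rcases ha with ⟨Γ, hΓ, ha⟩ | ⟨Γ, hΓ, ha⟩
  · exact le_or_le_of_isLUB ha fun y hy => hb y (hΓ hy)
  · exact le_or_le_of_isGLB ha fun y hy => hb y (hΓ hy)

theorem isChain_lubsOf_union_glbsOf (hΔ : IsChain (· ≤ ·) Δ) :
    IsChain (· ≤ ·) (lubsOf Δ ∪ glbsOf Δ) := fun _ ha _ hb _ =>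
  le_or_le_of_mem_lubsOf_union_glbsOf ha fun _ hy =>
    (le_or_le_of_mem_lubsOf_union_glbsOf hb fun _ hz => hΔ.total hz hy).symm

theorem mem_or_mem_lubsOf_of_isLUB (hΔ : IsChain (· ≤ ·) Δ)
    (hD : D ⊆ lubsOf Δ ∪ glbsOf Δ) (ha : IsLUB D a) : a ∈ D ∨ a ∈ lubsOf Δ := by
  by_cases haD : a ∈ D
  · exact .inl haD
  have ha_total : ∀ y ∈ Δ, y ≤ a ∨ a ≤ y := fun y hy =>
    (le_or_le_of_isLUB ha fun v hv =>
      le_or_le_of_mem_lubsOf_union_glbsOf (hD hv) fun z hz => hΔ.total hz hy).symm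
  refine .inr ⟨{y | y ∈ Δ ∧ y ≤ a}, fun y hy => hy.1, fun y hy => hy.2,
    fun u hu => ha.2 fun v hv => ?_⟩
  rcases hD hv with ⟨Γ, hΓ, hv'⟩ | ⟨Γ, hΓ, hv'⟩
  · exact hv'.2 fun y hy => hu ⟨hΓ hy, (hv'.1 hy).trans (ha.1 hv)⟩
  · obtain ⟨y, hy, hya⟩ : ∃ y ∈ Γ, y ≤ a := by
      by_contra! h
      have hav : a ≤ v := hv'.2 fun y hy => (ha_total y (hΓ hy)).resolve_left (h y hy)
      exact haD (le_antisymm (ha.1 hv) hav ▸ hv)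
    exact (hv'.1 hy).trans (hu ⟨hΓ hy, hya⟩)

theorem mem_or_mem_glbsOf_of_isGLB (hΔ : IsChain (· ≤ ·) Δ)
    (hD : D ⊆ lubsOf Δ ∪ glbsOf Δ) (ha : IsGLB D a) : a ∈ D ∨ a ∈ glbsOf Δ :=
  mem_or_mem_lubsOf_of_isLUB (α := αᵒᵈ) hΔ.symm (hD.trans (Set.union_comm _ _).subset) ha

end OrderTheory

section Subobjects

omit [Abelian 𝒜]

variable {Γ T Δ Δ' : Set (Subobject X)} {W : Subobject X}

theorem IsColimSub.isLUB_s9 (h : IsColimSub Γ W) : IsLUB Γ W := by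
  obtain ⟨hb, ⟨hc⟩⟩ := h
  refine ⟨hb, fun W' hW' =>
    Subobject.le_of_comm (hc.desc (chainCocone Γ W' fun _ hY => hW' hY)) ?_⟩
  refine hc.hom_ext fun Y => ?_
  erw [hc.fac_assoc, Subobject.ofLE_arrow, Subobject.ofLE_arrow]

theorem IsLimSub.isGLB_s9 (h : IsLimSub Γ W) (hne : Γ.Nonempty) : IsGLB Γ W := by
  obtain ⟨hb, ⟨hc⟩⟩ := h
  obtain ⟨Y, hY⟩ := hne
  refine ⟨hb, fun W' hW' =>
    Subobject.le_of_comm (hc.lift (chainCone Γ W' fun _ hZ => hW' hZ)) ?_⟩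
  have hfac := hc.fac (chainCone Γ W' fun _ hZ => hW' hZ) ⟨Y, hY⟩
  simp only [chainCone_π_app] at hfac
  erw [← Subobject.ofLE_arrow (hb Y hY), ← Category.assoc, hfac, Subobject.ofLE_arrow]

theorem isColimSub_of_isLUB (hJ1 : JHS1 X) (hΓ : IsPreChain Γ) (h : IsLUB Γ W) :
    IsColimSub Γ W := by
  obtain ⟨W', hW'⟩ := hJ1 Γ hΓ
  rwa [h.unique hW'.isLUB_s9]

theorem isLimSub_of_isGLB (hJ2 : JHS2 X) (hΓ : IsPreChain Γ) (hne : Γ.Nonempty)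
    (h : IsGLB Γ W) : IsLimSub Γ W := by
  obtain ⟨W', hW'⟩ := hJ2 Γ hΓ
  rwa [h.unique (hW'.isGLB_s9 hne)]

theorem setOf_isColimSub_eq_lubsOf (hJ1 : JHS1 X) (hΔ : IsPreChain Δ) :
    {W | ∃ Γ ⊆ Δ, IsColimSub Γ W} = lubsOf Δ := by
  ext W
  constructor
  · rintro ⟨Γ, hΓ, h⟩
    exact ⟨Γ, hΓ, h.isLUB_s9⟩
  · rintro ⟨Γ, hΓ, h⟩
    exact ⟨Γ, hΓ, isColimSub_of_isLUB hJ1 (hΔ.mono hΓ) h⟩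

theorem cocomplete_of_isLUB_mem (hJ1 : JHS1 X) (hT : IsPreChain T)
    (h : ∀ D ⊆ T, ∀ a, IsLUB D a → a ∈ T) : Cocomplete T := fun D hD => by
  obtain ⟨W, hW⟩ := hJ1 D (hT.mono hD)
  exact ⟨W, h D hD W hW.isLUB_s9, hW⟩

theorem lubsOf_subset_of_cocomplete (hco : Cocomplete Δ') (hsub : Δ ⊆ Δ') :
    lubsOf Δ ⊆ Δ' := by
  rintro a ⟨Γ, hΓ, ha⟩
  obtain ⟨W, hW, hc⟩ := hco Γ (hΓ.trans hsub)
  rwa [ha.unique hc.isLUB_s9]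

theorem glbsOf_subset_of_complete (hc : Complete Δ') (hsub : Δ ⊆ Δ') (htop : ⊤ ∈ Δ') :
    glbsOf Δ ⊆ Δ' := by
  rintro a ⟨Γ, hΓ, ha⟩
  rcases Γ.eq_empty_or_nonempty with rfl | hne
  · rwa [(isGLB_empty_iff.1 ha).eq_top]
  obtain ⟨W, hW, hl⟩ := hc Γ (hΓ.trans hsub)
  rwa [ha.unique (hl.isGLB_s9 hne)]

end Subobjects

section AbelianSubobjects

variable {T Δ : Set (Subobject X)} {W : Subobject X}

theorem IsLimSub.eq_bot_of_empty (h : IsLimSub ∅ W) : W = ⊥ := by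
  obtain ⟨hb, ⟨hc⟩⟩ := h
  have hzero : IsZero (W : 𝒜) := by
    rw [IsZero.iff_id_eq_zero]
    exact (hc.uniq _ (𝟙 _) fun Y => (Set.notMem_empty _ Y.2).elim).trans
      (hc.uniq _ 0 fun Y => (Set.notMem_empty _ Y.2).elim).symm
  refine le_antisymm (Subobject.le_of_comm 0 ?_) bot_le
  rw [zero_comp, hzero.eq_zero_of_src W.arrow]

-- `lim ∅` is the terminal object `0`, whereas `glb ∅ = ⊤`; both are absorbed by `⊥, ⊤ ∈ Δ`.
theorem setOf_isLimSub_eq_glbsOf (hJ2 : JHS2 X) (hΔ : IsSubChain Δ) :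
    {W | ∃ Γ ⊆ Δ, IsLimSub Γ W} = glbsOf Δ := by
  ext W
  constructor
  · rintro ⟨Γ, hΓ, h⟩
    rcases Γ.eq_empty_or_nonempty with rfl | hne
    · exact h.eq_bot_of_empty ▸ subset_glbsOf hΔ.2.1
    · exact ⟨Γ, hΓ, h.isGLB_s9 hne⟩
  · rintro ⟨Γ, hΓ, h⟩
    rcases Γ.eq_empty_or_nonempty with rfl | hne
    · obtain rfl : W = ⊤ := (isGLB_empty_iff.1 h).eq_top
      exact ⟨{⊤}, Set.singleton_subset_iff.2 hΔ.2.2,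
        isLimSub_of_isGLB hJ2 IsChain.singleton (Set.singleton_nonempty _) isGLB_singleton⟩
    · exact ⟨Γ, hΓ, isLimSub_of_isGLB hJ2 (hΔ.1.mono hΓ) hne h⟩

theorem complete_of_isGLB_mem (hJ2 : JHS2 X) (hT : IsPreChain T) (hbot : ⊥ ∈ T)
    (h : ∀ D ⊆ T, D.Nonempty → ∀ a, IsGLB D a → a ∈ T) : Complete T := fun D hD => by
  obtain ⟨W, hW⟩ := hJ2 D (hT.mono hD)
  rcases D.eq_empty_or_nonempty with rfl | hne
  · exact ⟨W, hW.eq_bot_of_empty ▸ hbot, hW⟩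
  · exact ⟨W, h D hD hne W (hW.isGLB_s9 hne), hW⟩

theorem isSubChain_of_subset (hΔ : IsSubChain Δ) (hT : IsPreChain T) (hsub : Δ ⊆ T) :
    IsSubChain T :=
  ⟨hT, hsub hΔ.2.1, hsub hΔ.2.2⟩

end AbelianSubobjects

theorem statement9_general (X : 𝒜) (Δ : Set (Subobject X))
    (hΔ : IsSubChain Δ) :
    (JHS1 X → JHS2 X →
      IsSubChain {W | (∃ Γ ⊆ Δ, IsColimSub Γ W) ∨ ∃ Γ ⊆ Δ, IsLimSub Γ W} ∧
      Bicomplete {W | (∃ Γ ⊆ Δ, IsColimSub Γ W) ∨ ∃ Γ ⊆ Δ, IsLimSub Γ W} ∧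
      Δ ⊆ {W | (∃ Γ ⊆ Δ, IsColimSub Γ W) ∨ ∃ Γ ⊆ Δ, IsLimSub Γ W} ∧
      ∀ Δ' : Set (Subobject X), IsSubChain Δ' → Bicomplete Δ' → Δ ⊆ Δ' →
        {W | (∃ Γ ⊆ Δ, IsColimSub Γ W) ∨ ∃ Γ ⊆ Δ, IsLimSub Γ W} ⊆ Δ') ∧
    (JHS1 X →
      IsSubChain {W | ∃ Γ ⊆ Δ, IsColimSub Γ W} ∧
      Cocomplete {W | ∃ Γ ⊆ Δ, IsColimSub Γ W} ∧
      Δ ⊆ {W | ∃ Γ ⊆ Δ, IsColimSub Γ W} ∧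
      ∀ Δ' : Set (Subobject X), IsSubChain Δ' → Cocomplete Δ' → Δ ⊆ Δ' →
        {W | ∃ Γ ⊆ Δ, IsColimSub Γ W} ⊆ Δ') ∧
    (JHS2 X →
      IsSubChain {W | ∃ Γ ⊆ Δ, IsLimSub Γ W} ∧
      Complete {W | ∃ Γ ⊆ Δ, IsLimSub Γ W} ∧
      Δ ⊆ {W | ∃ Γ ⊆ Δ, IsLimSub Γ W} ∧
      ∀ Δ' : Set (Subobject X), IsSubChain Δ' → Complete Δ' → Δ ⊆ Δ' →
        {W | ∃ Γ ⊆ Δ, IsLimSub Γ W} ⊆ Δ') := by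
  have hchain := isChain_lubsOf_union_glbsOf hΔ.1
  have hlubs : IsPreChain (lubsOf Δ) := hchain.mono Set.subset_union_left
  have hglbs : IsPreChain (glbsOf Δ) := hchain.mono Set.subset_union_right
  refine ⟨fun hJ1 hJ2 => ?_, fun hJ1 => ?_, fun hJ2 => ?_⟩
  · rw [Set.ofPred_or, setOf_isColimSub_eq_lubsOf hJ1 hΔ.1, setOf_isLimSub_eq_glbsOf hJ2 hΔ]
    have hsub : Δ ⊆ lubsOf Δ ∪ glbsOf Δ := subset_lubsOf.trans Set.subset_union_left
    refine ⟨isSubChain_of_subset hΔ hchain hsub, ⟨?_, ?_⟩, hsub, ?_⟩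
    · refine cocomplete_of_isLUB_mem hJ1 hchain fun D hD a ha => ?_
      exact (mem_or_mem_lubsOf_of_isLUB hΔ.1 hD ha).elim (fun h => hD h) .inl
    · refine complete_of_isGLB_mem hJ2 hchain (hsub hΔ.2.1) fun D hD _ a ha => ?_
      exact (mem_or_mem_glbsOf_of_isGLB hΔ.1 hD ha).elim (fun h => hD h) .inr
    · exact fun Δ' hΔ' hbi hsub' => Set.union_subset
        (lubsOf_subset_of_cocomplete hbi.1 hsub') (glbsOf_subset_of_complete hbi.2 hsub' hΔ'.2.2)
  · rw [setOf_isColimSub_eq_lubsOf hJ1 hΔ.1]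
    refine ⟨isSubChain_of_subset hΔ hlubs subset_lubsOf, ?_, subset_lubsOf,
      fun Δ' _ hco => lubsOf_subset_of_cocomplete hco⟩
    refine cocomplete_of_isLUB_mem hJ1 hlubs fun D hD a ha => ?_
    exact (mem_or_mem_lubsOf_of_isLUB hΔ.1 (hD.trans Set.subset_union_left) ha).elim
      (fun h => hD h) id
  · rw [setOf_isLimSub_eq_glbsOf hJ2 hΔ]
    refine ⟨isSubChain_of_subset hΔ hglbs subset_glbsOf, ?_, subset_glbsOf,
      fun Δ' hΔ' hc hsub => glbsOf_subset_of_complete hc hsub hΔ'.2.2⟩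
    refine complete_of_isGLB_mem hJ2 hglbs (subset_glbsOf hΔ.2.1) fun D hD _ a ha => ?_
    exact (mem_or_mem_glbsOf_of_isGLB hΔ.1 (hD.trans Set.subset_union_right) ha).elim
      (fun h => hD h) id

/-- Proposition 3.13: the bicompletion (respectively cocompletion, completion) of a
subobject chain of a subobject bicomplete (respectively cocomplete, complete) object. -/
theorem statement9 [EssentiallySmall.{w} 𝒜] (X : 𝒜) (Δ : Set (Subobject X))
    (hΔ : IsSubChain Δ) :
    (JHS1 X → JHS2 X →
      IsSubChain {W | (∃ Γ ⊆ Δ, IsColimSub Γ W) ∨ ∃ Γ ⊆ Δ, IsLimSub Γ W} ∧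
      Bicomplete {W | (∃ Γ ⊆ Δ, IsColimSub Γ W) ∨ ∃ Γ ⊆ Δ, IsLimSub Γ W} ∧
      Δ ⊆ {W | (∃ Γ ⊆ Δ, IsColimSub Γ W) ∨ ∃ Γ ⊆ Δ, IsLimSub Γ W} ∧
      ∀ Δ' : Set (Subobject X), IsSubChain Δ' → Bicomplete Δ' → Δ ⊆ Δ' →
        {W | (∃ Γ ⊆ Δ, IsColimSub Γ W) ∨ ∃ Γ ⊆ Δ, IsLimSub Γ W} ⊆ Δ') ∧
    (JHS1 X →
      IsSubChain {W | ∃ Γ ⊆ Δ, IsColimSub Γ W} ∧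
      Cocomplete {W | ∃ Γ ⊆ Δ, IsColimSub Γ W} ∧
      Δ ⊆ {W | ∃ Γ ⊆ Δ, IsColimSub Γ W} ∧
      ∀ Δ' : Set (Subobject X), IsSubChain Δ' → Cocomplete Δ' → Δ ⊆ Δ' →
        {W | ∃ Γ ⊆ Δ, IsColimSub Γ W} ⊆ Δ') ∧
    (JHS2 X →
      IsSubChain {W | ∃ Γ ⊆ Δ, IsLimSub Γ W} ∧
      Complete {W | ∃ Γ ⊆ Δ, IsLimSub Γ W} ∧
      Δ ⊆ {W | ∃ Γ ⊆ Δ, IsLimSub Γ W} ∧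
      ∀ Δ' : Set (Subobject X), IsSubChain Δ' → Complete Δ' → Δ ⊆ Δ' →
        {W | ∃ Γ ⊆ Δ, IsLimSub Γ W} ⊆ Δ') :=
  statement9_general X Δ hΔ

end JHS
end

section
/- (Zassenhaus Butterfly Lemma.) Let X be an object of an abelian category 𝒜 and let Y⁻, Y, Z⁻, Z be subobjects of X with Y⁻ ⊑ Y and Z⁻ ⊑ Z. Then there is an isomorphism (Y⁻ + (Y ∩ Z)) / (Y⁻ + (Y ∩ Z⁻)) ≅ (Z⁻ + (Z ∩ Y)) / (Z⁻ + (Z ∩ Y⁻)). -/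
open CategoryTheory CategoryTheory.Limits

universe w v u

namespace JHS

variable {𝒜 : Type u} [Category.{v} 𝒜] [Abelian 𝒜]

variable {X : 𝒜}

section Butterfly

open Subobject

/-- The two inclusions into a sup of subobjects are jointly epimorphic. -/
lemma jointlyEpi {x y : Subobject X} {T : 𝒜}
    (g : ((x ⊔ y : Subobject X) : 𝒜) ⟶ T)
    (hx : Subobject.ofLE x (x ⊔ y) le_sup_left ≫ g = 0)
    (hy : Subobject.ofLE y (x ⊔ y) le_sup_right ≫ g = 0) : g = 0 := by
  have hk : x ⊔ y ≤ Subobject.mk (kernel.ι g ≫ (x ⊔ y).arrow) := by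
    apply sup_le
    · exact Subobject.le_mk_of_comm (kernel.lift g _ hx)
        (by rw [← Category.assoc, kernel.lift_ι, Subobject.ofLE_arrow])
    · exact Subobject.le_mk_of_comm (kernel.lift g _ hy)
        (by rw [← Category.assoc, kernel.lift_ι, Subobject.ofLE_arrow])
  have h1 : Subobject.ofLEMk _ _ hk ≫ (kernel.ι g ≫ (x ⊔ y).arrow) = (x ⊔ y).arrow :=
    Subobject.ofLEMk_comp hk
  rw [← Category.assoc] at h1
  have h2 : Subobject.ofLEMk _ _ hk ≫ kernel.ι g = 𝟙 _ := by
    rw [← cancel_mono (x ⊔ y).arrow, h1, Category.id_comp]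
  calc g = (Subobject.ofLEMk _ _ hk ≫ kernel.ι g) ≫ g := by rw [h2, Category.id_comp]
    _ = 0 := by rw [Category.assoc, kernel.condition, comp_zero]

/-- Factorization through a mono subobject arrow can be checked after precomposing with
an epimorphism. -/
lemma factors_of_epi_comp {Q : Subobject X} {W' W : 𝒜} (v : W' ⟶ W) [Epi v] (f : W ⟶ X)
    (h : Q.Factors (v ≫ f)) : Q.Factors f := by
  have hk : Q.factorThru (v ≫ f) h ≫ Q.arrow = v ≫ f := Q.factorThru_arrow _ h
  have hk0 : kernel.ι v ≫ Q.factorThru (v ≫ f) h = 0 := by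
    rw [← cancel_mono Q.arrow, Category.assoc, hk, ← Category.assoc, kernel.condition,
      zero_comp, zero_comp]
  have : f = Abelian.epiDesc v _ hk0 ≫ Q.arrow := by
    rw [← cancel_epi v, ← Category.assoc, Abelian.comp_epiDesc, hk]
  rw [this]
  exact Subobject.factors_comp_arrow _

/-- The subobject lattice of an object of an abelian category is modular. -/
instance : IsModularLattice (Subobject X) := by
  constructor
  intro x y z hxz
  -- the canonical map from the biproduct onto the sup
  let u : ((x : 𝒜) ⊞ (y : 𝒜)) ⟶ ((x ⊔ y : Subobject X) : 𝒜) :=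
    biprod.desc (Subobject.ofLE x (x ⊔ y) le_sup_left) (Subobject.ofLE y (x ⊔ y) le_sup_right)
  haveI : Epi u := by
    apply Preadditive.epi_of_cancel_zero
    intro T g hg
    refine jointlyEpi g ?_ ?_
    · have := biprod.inl ≫= hg
      simpa [u] using this
    · have := biprod.inr ≫= hg
      simpa [u] using this
  set W : Subobject X := (x ⊔ y) ⊓ z with hW
  let ul : ((W : Subobject X) : 𝒜) ⟶ ((x ⊔ y : Subobject X) : 𝒜) :=
    Subobject.ofLE W (x ⊔ y) inf_le_left
  haveI : Epi (pullback.snd u ul) := inferInstance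
  have key : pullback.snd u ul ≫ W.arrow =
      (pullback.fst u ul ≫ biprod.fst) ≫ x.arrow +
        (pullback.fst u ul ≫ biprod.snd) ≫ y.arrow := by
    have h3 : biprod.desc x.arrow y.arrow =
        biprod.fst ≫ x.arrow + biprod.snd ≫ y.arrow := by
      apply biprod.hom_ext' <;> simp
    calc pullback.snd u ul ≫ W.arrow
        = pullback.snd u ul ≫ ul ≫ (x ⊔ y).arrow := by
          rw [Subobject.ofLE_arrow]
      _ = pullback.fst u ul ≫ u ≫ (x ⊔ y).arrow := by
          rw [← Category.assoc, ← pullback.condition, Category.assoc]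
      _ = pullback.fst u ul ≫ biprod.desc x.arrow y.arrow := by
          congr 1
          apply biprod.hom_ext' <;> simp [u, Subobject.ofLE_arrow]
      _ = _ := by rw [h3]; simp [Preadditive.comp_add]
  have hxfac : (x ⊔ y ⊓ z).Factors ((pullback.fst u ul ≫ biprod.fst) ≫ x.arrow) :=
    Subobject.sup_factors_of_factors_left (Subobject.factors_comp_arrow _)
  have hyz : (y ⊓ z).Factors ((pullback.fst u ul ≫ biprod.snd) ≫ y.arrow) := by
    rw [Subobject.inf_factors]
    constructor
    · exact Subobject.factors_comp_arrow _
    · have e : (pullback.fst u ul ≫ biprod.snd) ≫ y.arrow =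
          pullback.snd u ul ≫ W.arrow - (pullback.fst u ul ≫ biprod.fst) ≫ x.arrow := by
        rw [key]; abel
      have e2 : pullback.snd u ul ≫ W.arrow - (pullback.fst u ul ≫ biprod.fst) ≫ x.arrow =
          (pullback.snd u ul ≫ Subobject.ofLE W z inf_le_right -
            (pullback.fst u ul ≫ biprod.fst) ≫ Subobject.ofLE x z hxz) ≫ z.arrow := by
        simp [Preadditive.sub_comp, Subobject.ofLE_arrow]
      rw [e, e2]
      exact Subobject.factors_comp_arrow _
  have hfac : (x ⊔ y ⊓ z).Factors (pullback.snd u ul ≫ W.arrow) := by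
    rw [key]
    exact Subobject.factors_add _ _ hxfac (Subobject.sup_factors_of_factors_right hyz)
  have hf' : (x ⊔ y ⊓ z).Factors W.arrow :=
    factors_of_epi_comp (pullback.snd u ul) W.arrow hfac
  exact Subobject.le_of_comm (Subobject.factorThru _ _ hf') (Subobject.factorThru_arrow _ _ hf')

/-- The second isomorphism theorem for subobjects in an abelian category:
`B/(A ⊓ B) ≅ (A ⊔ B)/A`. -/
noncomputable def secondIso (A B : Subobject X) :
    quot (A ⊓ B) B inf_le_right ≅ quot A (A ⊔ B) le_sup_left := by
  let i := Subobject.ofLE A (A ⊔ B) le_sup_left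
  let j := Subobject.ofLE B (A ⊔ B) le_sup_right
  let π := cokernel.π i
  let f := j ≫ π
  haveI hf : Epi f := by
    apply Preadditive.epi_of_cancel_zero
    intro T g hg
    have h1 : Subobject.ofLE A (A ⊔ B) le_sup_left ≫ π ≫ g = 0 := by
      rw [← Category.assoc]
      show (i ≫ π) ≫ g = 0
      rw [cokernel.condition, zero_comp]
    have h2 : Subobject.ofLE B (A ⊔ B) le_sup_right ≫ π ≫ g = 0 := by
      rw [← Category.assoc]; exact hg
    have : π ≫ g = 0 := jointlyEpi _ h1 h2
    rw [← cancel_epi π, this, comp_zero]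
  have w : Subobject.ofLE (A ⊓ B) B inf_le_right ≫ f = 0 := by
    show Subobject.ofLE (A ⊓ B) B inf_le_right ≫ j ≫ π = 0
    rw [← Category.assoc, Subobject.ofLE_comp_ofLE,
      ← Subobject.ofLE_comp_ofLE (A ⊓ B) A (A ⊔ B) inf_le_left le_sup_left, Category.assoc]
    show _ ≫ i ≫ π = 0
    rw [cokernel.condition, comp_zero]
  let l : ((A ⊓ B : Subobject X) : 𝒜) ⟶ kernel f :=
    kernel.lift f (Subobject.ofLE (A ⊓ B) B inf_le_right) w
  have hlk : l ≫ kernel.ι f = Subobject.ofLE (A ⊓ B) B inf_le_right := kernel.lift_ι _ _ _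
  -- the kernel of `f` is `A ⊓ B`
  have ht : (kernel.ι f ≫ j) ≫ π = 0 := by
    rw [Category.assoc]; exact kernel.condition f
  let r : kernel f ⟶ (A : 𝒜) := Abelian.monoLift i _ ht
  have hr : r ≫ i = kernel.ι f ≫ j := Abelian.monoLift_comp i _ ht
  have hKA : Subobject.mk (kernel.ι f ≫ B.arrow) ≤ A := by
    refine Subobject.mk_le_of_comm r ?_
    have : r ≫ i ≫ (A ⊔ B).arrow = kernel.ι f ≫ j ≫ (A ⊔ B).arrow := by
      rw [← Category.assoc, hr, Category.assoc]
    rw [Subobject.ofLE_arrow, Subobject.ofLE_arrow] at this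
    exact this
  have hKB : Subobject.mk (kernel.ι f ≫ B.arrow) ≤ B :=
    Subobject.mk_le_of_comm (kernel.ι f) rfl
  let m' : kernel f ⟶ ((A ⊓ B : Subobject X) : 𝒜) :=
    Subobject.ofMkLE _ _ (le_inf hKA hKB)
  have hm' : m' ≫ (A ⊓ B).arrow = kernel.ι f ≫ B.arrow := Subobject.ofMkLE_arrow _
  have hm'2 : m' ≫ Subobject.ofLE (A ⊓ B) B inf_le_right = kernel.ι f := by
    rw [← cancel_mono B.arrow, Category.assoc, Subobject.ofLE_arrow, hm']
  haveI : IsIso l := by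
    refine ⟨⟨m', ?_, ?_⟩⟩
    · rw [← cancel_mono (A ⊓ B).arrow, Category.assoc, hm', ← Category.assoc, hlk,
        Subobject.ofLE_arrow, Category.id_comp]
    · rw [← cancel_mono (kernel.ι f), Category.assoc, hlk, hm'2, Category.id_comp]
  -- assemble the isomorphism
  refine (cokernelIsoOfEq hlk.symm) ≪≫ (cokernelEpiComp l (kernel.ι f)) ≪≫ ?_
  exact IsColimit.coconePointUniqueUpToIso (cokernelIsCokernel (kernel.ι f))
    (Abelian.epiIsCokernelOfKernel
      (Fork.ofι (kernel.ι f) ((kernel.condition f).trans comp_zero.symm)) (kernelIsKernel f))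

/-- `quot` only depends on the subobjects. -/
noncomputable def quotCongr {W Y W' Y' : Subobject X} (h : W ≤ Y) (h' : W' ≤ Y')
    (e1 : W = W') (e2 : Y = Y') : quot W Y h ≅ quot W' Y' h' := by
  subst e1; subst e2; exact Iso.refl _

end Butterfly

/-- Lemma 4.7: the Zassenhaus Butterfly Lemma. -/
theorem statement10 (X : 𝒜) (Y' Y Z' Z : Subobject X) (hY : Y' ≤ Y) (hZ : Z' ≤ Z) :
    Nonempty
      (quot (Y' ⊔ (Y ⊓ Z')) (Y' ⊔ (Y ⊓ Z)) (sup_le_sup_left (inf_le_inf_left Y hZ) Y') ≅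
        quot (Z' ⊔ (Z ⊓ Y')) (Z' ⊔ (Z ⊓ Y)) (sup_le_sup_left (inf_le_inf_left Z hY) Z')) := by
  have eY1 : (Y' ⊔ (Y ⊓ Z')) ⊔ (Y ⊓ Z) = Y' ⊔ (Y ⊓ Z) := by
    rw [sup_assoc, sup_eq_right.2 (inf_le_inf_left Y hZ)]
  have eY2 : (Y' ⊔ (Y ⊓ Z')) ⊓ (Y ⊓ Z) = (Y ⊓ Z') ⊔ (Y' ⊓ Z) := by
    rw [sup_comm Y' (Y ⊓ Z'), sup_inf_assoc_of_le _ (inf_le_inf_left Y hZ)]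
    congr 1
    rw [← inf_assoc, inf_eq_left.2 hY]
  have eZ1 : (Z' ⊔ (Z ⊓ Y')) ⊔ (Z ⊓ Y) = Z' ⊔ (Z ⊓ Y) := by
    rw [sup_assoc, sup_eq_right.2 (inf_le_inf_left Z hY)]
  have eZ2 : (Z' ⊔ (Z ⊓ Y')) ⊓ (Z ⊓ Y) = (Z ⊓ Y') ⊔ (Z' ⊓ Y) := by
    rw [sup_comm Z' (Z ⊓ Y'), sup_inf_assoc_of_le _ (inf_le_inf_left Z hY)]
    congr 1
    rw [← inf_assoc, inf_eq_left.2 hZ]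
  have ecross : (Y ⊓ Z') ⊔ (Y' ⊓ Z) = (Z ⊓ Y') ⊔ (Z' ⊓ Y) := by
    rw [inf_comm Y Z', inf_comm Y' Z, sup_comm]
  refine ⟨?_⟩
  calc quot (Y' ⊔ (Y ⊓ Z')) (Y' ⊔ (Y ⊓ Z)) (sup_le_sup_left (inf_le_inf_left Y hZ) Y')
      ≅ quot (Y' ⊔ (Y ⊓ Z')) ((Y' ⊔ (Y ⊓ Z')) ⊔ (Y ⊓ Z)) le_sup_left :=
        quotCongr _ _ rfl eY1.symm
    _ ≅ quot ((Y' ⊔ (Y ⊓ Z')) ⊓ (Y ⊓ Z)) (Y ⊓ Z) inf_le_right :=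
        (secondIso (Y' ⊔ (Y ⊓ Z')) (Y ⊓ Z)).symm
    _ ≅ quot ((Z' ⊔ (Z ⊓ Y')) ⊓ (Z ⊓ Y)) (Z ⊓ Y) inf_le_right :=
        quotCongr _ _ (by rw [eY2, eZ2, ecross]) (inf_comm Y Z)
    _ ≅ quot (Z' ⊔ (Z ⊓ Y')) ((Z' ⊔ (Z ⊓ Y')) ⊔ (Z ⊓ Y)) le_sup_left :=
        secondIso (Z' ⊔ (Z ⊓ Y')) (Z ⊓ Y)
    _ ≅ quot (Z' ⊔ (Z ⊓ Y')) (Z' ⊔ (Z ⊓ Y)) (sup_le_sup_left (inf_le_inf_left Z hY) Z') :=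
        quotCongr _ _ rfl eZ1

end JHS
end

section
/- Let 𝒜 be a skeletally small abelian category and X an object of 𝒜 such that for every pre-subobject chain Δ of X the colimit colim Δ exists in 𝒜. Then the following are equivalent: (1) X is subobject cocomplete, i.e., for every pre-subobject chain Δ of X the induced morphism colim Δ → X is a monomorphism; (2) for every directed system {f_α : Y_α → Z_α} of morphisms in the subobject category Sub(X) (so each Y_α and Z_α is a subobject of X and f_α is the canonical inclusion), the colimit morphism colim f_α, computed in 𝒜, is a monomorphism; (3) for every directed system of short exact sequences 0 → Y_α → Z_α → W_α → 0 in 𝒜 whose monomorphisms form a directed system in Sub(X), the colimit colim W_α exists and the sequence 0 → colim Y_α → colim Z_α → colim W_α → 0 is exact. -/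
/-!
(1) ⇔ (2). If every chain of subobjects of `X` has a colimit which is a subobject, then so does
every directed family. An infinite directed set is the union of a chain of directed subsets of
strictly smaller cardinality (Iwamura: finite subsets in the countable case, closures of the
initial segments of an initial well-order under a choice of upper bounds otherwise), so by
induction on the cardinality the colimit of a directed family is the colimit of the chain of
the colimits of its pieces. For directed `Y ≤ Z` the monomorphism `colim Y → X` then factors
through `colim Y → colim Z`. Conversely, a nonempty chain `Δ` is a directed family below the
constant family `⊤`, whose colimit is `X`.

(2) ⇔ (3). Colimits commute with cokernels, so `colim W` exists and is the cokernel of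
`colim Y → colim Z`; the colimit sequence is short exact exactly when this map is a
monomorphism. For (3) ⇒ (2), apply (3) to the pointwise cokernels.
-/

open CategoryTheory CategoryTheory.Limits

universe w v u

namespace JHS

variable {𝒜 : Type u} [Category.{v} 𝒜] [Abelian 𝒜]

variable {X : 𝒜}

/-- The cocone over the diagram of a chain of subobjects of `X` with vertex `X` itself,
whose legs are the subobject inclusions.  The induced morphism `colim Δ ⟶ X` is the
canonical comparison map. -/
noncomputable def coconeToX (Δ : Set (Subobject X)) : Cocone (chainDiagram Δ) where
  pt := X
  ι :=
    { app := fun Y => Y.1.arrow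
      naturality := fun Y Z f => by simp [chainDiagram, Subobject.ofLE_arrow] }

/-- The diagram in `𝒜` associated to a monotone family of subobjects of `X`. -/
noncomputable def monoDiagram {J : Type w} [Preorder J] (Y : J →o Subobject X) : J ⥤ 𝒜 where
  obj j := (Y j : 𝒜)
  map {j k} f := Subobject.ofLE _ _ (Y.monotone (leOfHom f))
  map_id j := Subobject.ofLE_refl _
  map_comp {j k l} f g := (Subobject.ofLE_comp_ofLE _ _ _ _ _).symm

/-- The natural transformation of diagrams induced by a pointwise inequality of monotone
families of subobjects of `X` (a "directed system in `Sub(X)`"). -/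
noncomputable def monoNatTrans {J : Type w} [Preorder J] (Y Z : J →o Subobject X)
    (h : ∀ j, Y j ≤ Z j) : monoDiagram Y ⟶ monoDiagram Z where
  app j := Subobject.ofLE _ _ (h j)
  naturality j k f := by simp [monoDiagram, Subobject.ofLE_comp_ofLE]

variable (X) in
/-- Condition (1) of Lemma 4.6: `X` is subobject cocomplete, i.e. for every pre-subobject
chain `Δ` of `X` the induced morphism `colim Δ ⟶ X` is a monomorphism. -/
def Cond1 (hex : ∀ Δ : Set (Subobject X), IsPreChain Δ → HasColimit (chainDiagram Δ)) :
    Prop :=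
  ∀ (Δ : Set (Subobject X)) (hΔ : IsPreChain Δ),
    Mono (@colimit.desc _ _ _ _ (chainDiagram Δ) (hex Δ hΔ) (coconeToX Δ))

variable (X) in
/-- Condition (2) of Lemma 4.6: for every directed system `{f_α : Y_α ⟶ Z_α}` in `Sub(X)`,
the colimit morphism, computed in `𝒜`, is a monomorphism. -/
def Cond2 : Prop :=
  ∀ (J : Type (max u v)) (_ : Preorder J) (_ : IsDirected J (· ≤ ·))
    (Y Z : J →o Subobject X) (h : ∀ j, Y j ≤ Z j)
    (hY : HasColimit (monoDiagram Y)) (hZ : HasColimit (monoDiagram Z)),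
    Mono (@colimMap _ _ _ _ (monoDiagram Z) (monoDiagram Y) hZ hY (monoNatTrans Y Z h))

variable (X) in
/-- Condition (3) of Lemma 4.6: for every directed system of short exact sequences
`0 → Y_α → Z_α → W_α → 0` whose monomorphisms form a directed system in `Sub(X)`,
the colimit `colim W_α` exists and the colimit sequence is short exact. -/
def Cond3 : Prop :=
  ∀ (J : Type (max u v)) (_ : Preorder J) (_ : IsDirected J (· ≤ ·))
    (Y Z : J →o Subobject X) (h : ∀ j, Y j ≤ Z j)
    (W : J ⥤ 𝒜) (g : monoDiagram Z ⟶ W)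
    (hw : ∀ j, (monoNatTrans Y Z h).app j ≫ g.app j = 0)
    (_ : ∀ j, (ShortComplex.mk ((monoNatTrans Y Z h).app j) (g.app j) (hw j)).ShortExact)
    (hY : HasColimit (monoDiagram Y)) (hZ : HasColimit (monoDiagram Z)),
    ∃ hW : HasColimit W,
      ∃ hzero : @colimMap _ _ _ _ (monoDiagram Z) (monoDiagram Y) hZ hY
            (monoNatTrans Y Z h) ≫
          @colimMap _ _ _ _ W (monoDiagram Z) hW hZ g = 0,
        (ShortComplex.mk _ _ hzero).ShortExact

end JHS

open Cardinal

section DirectedCover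

variable {K : Type*}

def closureUnder (u : K → K → K) (S : Set K) : Set K :=
  ⋃ n : ℕ, (fun T => T ∪ Set.image2 u T T)^[n] S

lemma subset_closureUnder (u : K → K → K) (S : Set K) : S ⊆ closureUnder u S :=
  Set.subset_iUnion_of_subset 0 subset_rfl

lemma closureUnder_mono (u : K → K → K) : Monotone (closureUnder u) := by
  intro S T hST
  refine Set.iUnion_mono fun n => ?_
  induction n with
  | zero => exact hST
  | succ n ih =>
    simp only [Function.iterate_succ_apply']
    exact Set.union_subset_union ih (Set.image2_subset ih ih)

lemma monotone_iterate_union_image2 (u : K → K → K) (S : Set K) :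
    Monotone fun n : ℕ => (fun T => T ∪ Set.image2 u T T)^[n] S :=
  monotone_nat_of_le_succ fun n => by
    rw [Function.iterate_succ_apply']
    exact Set.subset_union_left

lemma apply_mem_closureUnder (u : K → K → K) (S : Set K) {a b : K}
    (ha : a ∈ closureUnder u S) (hb : b ∈ closureUnder u S) : u a b ∈ closureUnder u S := by
  have hmono := monotone_iterate_union_image2 u S
  obtain ⟨n, hn⟩ := Set.mem_iUnion.mp ha
  obtain ⟨m, hm⟩ := Set.mem_iUnion.mp hb
  refine Set.mem_iUnion.mpr ⟨max n m + 1, ?_⟩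
  rw [Function.iterate_succ_apply']
  exact Or.inr (Set.mem_image2_of_mem (hmono (le_max_left n m) hn)
    (hmono (le_max_right n m) hm))

lemma mk_closureUnder_le (u : K → K → K) (S : Set K) :
    #(closureUnder u S) ≤ max #S ℵ₀ := by
  have hc : ℵ₀ ≤ max #S ℵ₀ := le_max_right _ _
  have hiter : ∀ n : ℕ, #((fun T => T ∪ Set.image2 u T T)^[n] S) ≤ max #S ℵ₀ := by
    intro n
    induction n with
    | zero => exact le_max_left _ _
    | succ n ih =>
      rw [Function.iterate_succ_apply']
      calc _ ≤ _ + _ := mk_union_le _ _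
        _ ≤ max #S ℵ₀ + max #S ℵ₀ * max #S ℵ₀ :=
          add_le_add ih (mk_image2_le.trans (mul_le_mul' ih ih))
        _ = max #S ℵ₀ := by rw [mul_eq_self hc, add_eq_self hc]
  refine mk_subtype_le_of_countable_eventually_mem (l := Filter.atTop) (fun x hx => ?_) hiter
  obtain ⟨n, hn⟩ := Set.mem_iUnion.mp hx
  exact Filter.eventually_atTop.2 ⟨n, fun m hm => monotone_iterate_union_image2 u S hm hn⟩

variable {J : Type*} [Preorder J] [IsDirectedOrder J]

lemma exists_isChain_cover_finite_directedOn [Nonempty J] [Countable J] :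
    ∃ 𝒟 : Set (Set J), IsChain (· ⊆ ·) 𝒟 ∧ (∀ j, ∃ D ∈ 𝒟, j ∈ D) ∧
      ∀ D ∈ 𝒟, DirectedOn (· ≤ ·) D ∧ D.Finite := by
  obtain ⟨e, he⟩ := exists_surjective_nat J
  choose u hu₁ hu₂ using fun a b : J => directed_of (· ≤ ·) a b
  let m : ℕ → J := fun n => Nat.rec (e 0) (fun k mk => u mk (e (k + 1))) n
  have hm : Monotone m := monotone_nat_of_le_succ fun n => hu₁ _ _
  have hem : ∀ n, e n ≤ m n := fun
    | 0 => le_rfl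
    | _ + 1 => hu₂ _ _
  let D : ℕ → Set J := fun n => e '' Set.Iic n ∪ m '' Set.Iic n
  have hD : Monotone D := fun a b hab =>
    Set.union_subset_union (Set.image_mono (Set.Iic_subset_Iic.2 hab))
      (Set.image_mono (Set.Iic_subset_Iic.2 hab))
  refine ⟨Set.range D, hD.isChain_range, fun j => ?_, ?_⟩
  · obtain ⟨n, rfl⟩ := he j
    exact ⟨D n, ⟨n, rfl⟩, Or.inl ⟨n, Set.mem_Iic.2 le_rfl, rfl⟩⟩
  · rintro _ ⟨n, rfl⟩
    have hle : ∀ a ∈ D n, a ≤ m n := by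
      rintro a (⟨i, hi, rfl⟩ | ⟨i, hi, rfl⟩)
      · exact (hem i).trans (hm hi)
      · exact hm hi
    refine ⟨fun a ha b hb => ⟨m n, Or.inr ⟨n, Set.mem_Iic.2 le_rfl, rfl⟩, hle a ha, hle b hb⟩, ?_⟩
    exact ((Set.finite_Iic n).image e).union ((Set.finite_Iic n).image m)

lemma exists_isChain_cover_directedOn_of_aleph0_lt (hJ : ℵ₀ < #J) :
    ∃ 𝒟 : Set (Set J), IsChain (· ⊆ ·) 𝒟 ∧ (∀ j, ∃ D ∈ 𝒟, j ∈ D) ∧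
      ∀ D ∈ 𝒟, DirectedOn (· ≤ ·) D ∧ #D < #J := by
  choose u hu₁ hu₂ using fun a b : J => directed_of (· ≤ ·) a b
  obtain ⟨e⟩ := Cardinal.eq.1 (mk_ord_toType #J)
  let D : (#J).ord.ToType → Set J := fun p => closureUnder u (e '' Set.Iic p)
  have hD : Monotone D := fun p q hpq =>
    closureUnder_mono u (Set.image_mono (Set.Iic_subset_Iic.2 hpq))
  refine ⟨Set.range D, hD.isChain_range, fun j => ?_, ?_⟩
  · exact ⟨D (e.symm j), ⟨_, rfl⟩,
      subset_closureUnder u _ ⟨e.symm j, Set.mem_Iic.2 le_rfl, e.apply_symm_apply j⟩⟩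
  · rintro _ ⟨p, rfl⟩
    refine ⟨fun a ha b hb => ⟨u a b, apply_mem_closureUnder u _ ha hb, hu₁ a b, hu₂ a b⟩, ?_⟩
    have hIio : #(Set.Iio p) < #J := by simpa using mk_Iio_lt p (by simp)
    have hIic : #(Set.Iic p) < #J := by
      rw [← Set.Iio_insert]
      exact mk_insert_le.trans_lt (add_lt_of_lt hJ.le hIio (one_lt_aleph0.trans hJ))
    exact (mk_closureUnder_le u _).trans_lt (max_lt (mk_image_le.trans_lt hIic) hJ)

theorem exists_isChain_cover_directedOn_mk_lt [Infinite J] :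
    ∃ 𝒟 : Set (Set J), IsChain (· ⊆ ·) 𝒟 ∧ (∀ j, ∃ D ∈ 𝒟, j ∈ D) ∧
      ∀ D ∈ 𝒟, DirectedOn (· ≤ ·) D ∧ #D < #J := by
  rcases (aleph0_le_mk J).lt_or_eq with hJ | hJ
  · exact exists_isChain_cover_directedOn_of_aleph0_lt hJ
  · have : Countable J := mk_le_aleph0_iff.1 hJ.ge
    obtain ⟨𝒟, hchain, hcov, hdir⟩ := exists_isChain_cover_finite_directedOn (J := J)
    exact ⟨𝒟, hchain, hcov, fun D hD =>
      ⟨(hdir D hD).1, hJ ▸ lt_aleph0_iff_set_finite.2 (hdir D hD).2⟩⟩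

end DirectedCover

section ColimitCokernel

universe v₁ v₂

variable {J : Type*} {C : Type*} [Category.{v₁} J] [Category.{v₂} C]

section

variable [HasZeroMorphisms C] {F G H : J ⥤ C} {f : F ⟶ G} {g : G ⟶ H}
  (hfg : ∀ j, f.app j ≫ g.app j = 0) (hg : ∀ j, IsColimit (CokernelCofork.ofπ (g.app j) (hfg j)))
  [HasColimit F] [HasColimit G] [HasCokernel (colimMap f)]

noncomputable def cokernelColimMapι (j : J) : H.obj j ⟶ cokernel (colimMap f) :=
  Cofork.IsColimit.desc (hg j) (colimit.ι G j ≫ cokernel.π (colimMap f))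
    (by rw [← ι_colimMap_assoc, cokernel.condition, comp_zero, zero_comp])

@[simp]
lemma app_comp_cokernelColimMapι (j : J) :
    g.app j ≫ cokernelColimMapι hfg hg j = colimit.ι G j ≫ cokernel.π (colimMap f) :=
  Cofork.IsColimit.π_desc' (hg j) _ _

@[simp]
lemma app_comp_cokernelColimMapι_assoc (j : J) {W : C} (k : cokernel (colimMap f) ⟶ W) :
    g.app j ≫ cokernelColimMapι hfg hg j ≫ k = colimit.ι G j ≫ cokernel.π (colimMap f) ≫ k := by
  rw [← Category.assoc, app_comp_cokernelColimMapι, Category.assoc]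

noncomputable abbrev cokernelColimMapCocone : Cocone H where
  pt := cokernel (colimMap f)
  ι :=
    { app := cokernelColimMapι hfg hg
      naturality j k φ := Cofork.IsColimit.hom_ext (hg j) (by
        simp [← g.naturality_assoc]) }

noncomputable def isColimitCokernelColimMapCocone :
    IsColimit (cokernelColimMapCocone hfg hg) where
  desc s := cokernel.desc _ (colimit.desc G ((Cocone.precompose g).obj s))
    (colimit.hom_ext fun j => by
      rw [ι_colimMap_assoc, colimit.ι_desc, comp_zero]
      exact (reassoc_of% (hfg j)) _ |>.trans zero_comp)
  fac s j := Cofork.IsColimit.hom_ext (hg j) (by simp)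
  uniq s m hm := coequalizer.hom_ext (colimit.hom_ext fun j => by
    rw [← app_comp_cokernelColimMapι_assoc hfg hg]
    simp [hm])

end

lemma exists_shortExact_colimMap [Abelian C] {F G H : J ⥤ C} (f : F ⟶ G) (g : G ⟶ H)
    (hfg : ∀ j, f.app j ≫ g.app j = 0)
    (hS : ∀ j, (ShortComplex.mk (f.app j) (g.app j) (hfg j)).ShortExact)
    [HasColimit F] [HasColimit G] [Mono (colimMap f)] :
    ∃ _ : HasColimit H, ∃ hzero : colimMap f ≫ colimMap g = 0,
      (ShortComplex.mk _ _ hzero).ShortExact := by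
  let t := isColimitCokernelColimMapCocone hfg fun j => (hS j).gIsCokernel
  have : HasColimit H := ⟨⟨⟨_, t⟩⟩⟩
  let e := colimit.isoColimitCocone ⟨_, t⟩
  have hg : colimMap g ≫ e.hom = cokernel.π (colimMap f) := colimit.hom_ext fun j => by simp [e]
  have hzero : colimMap f ≫ colimMap g = 0 := by
    rw [← cancel_mono e.hom, Category.assoc, hg, cokernel.condition, zero_comp]
  refine ⟨this, hzero, ShortComplex.shortExact_of_iso ?_
    (.mk' ((ShortComplex.mk _ _ (cokernel.condition (colimMap f))).exact_of_g_is_cokernel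
      (cokernelIsCokernel _)) inferInstance inferInstance)⟩
  exact ShortComplex.isoMk (Iso.refl _) (Iso.refl _) e.symm (by simp) (by simp [← hg])

end ColimitCokernel

namespace JHS

variable {𝒜 : Type u} [Category.{v} 𝒜] {X : 𝒜}

section Families

variable {J : Type*} [Preorder J]

@[simp]
lemma monoDiagram_obj (Y : J →o Subobject X) (j : J) : (monoDiagram Y).obj j = (Y j : 𝒜) := rfl

@[simp]
lemma monoDiagram_map (Y : J →o Subobject X) {j k : J} (f : j ⟶ k) :
    (monoDiagram Y).map f = Subobject.ofLE _ _ (Y.monotone (leOfHom f)) := rfl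

@[simp]
lemma monoNatTrans_app (Y Z : J →o Subobject X) (h : ∀ j, Y j ≤ Z j) (j : J) :
    (monoNatTrans Y Z h).app j = Subobject.ofLE _ _ (h j) := rfl

noncomputable abbrev monoCocone (Y : J →o Subobject X) (W : Subobject X) (h : ∀ j, Y j ≤ W) :
    Cocone (monoDiagram Y) where
  pt := (W : 𝒜)
  ι :=
    { app j := Subobject.ofLE _ _ (h j)
      naturality j k f := by simp }

noncomputable abbrev monoCoconeToX (Y : J →o Subobject X) : Cocone (monoDiagram Y) where
  pt := X
  ι :=
    { app j := (Y j).arrow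
      naturality j k f := by simp }

def IsColimSubFamily (Y : J →o Subobject X) (W : Subobject X) : Prop :=
  ∃ h : ∀ j, Y j ≤ W, Nonempty (IsColimit (monoCocone Y W h))

variable {Y : J →o Subobject X} {W : Subobject X}

lemma IsColimSubFamily.le_of_forall_le (hW : IsColimSubFamily Y W) {U : Subobject X}
    (hU : ∀ j, Y j ≤ U) : W ≤ U := by
  obtain ⟨h, ⟨t⟩⟩ := hW
  refine Subobject.le_of_comm (t.desc (monoCocone Y U hU)) (t.hom_ext fun j => ?_)
  rw [t.fac_assoc]
  simp

lemma isColimSubFamily_bot [HasZeroMorphisms 𝒜] [HasZeroObject 𝒜] [IsEmpty J]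
    (Y : J →o Subobject X) : IsColimSubFamily Y ⊥ := by
  refine ⟨isEmptyElim, ⟨{ desc _ := 0, fac _ j := isEmptyElim j, uniq _ _ _ := ?_ }⟩⟩
  exact ((isZero_zero 𝒜).of_iso Subobject.botCoeIsoZero).eq_of_src _ _

lemma isColimSubFamily_apply [IsDirectedOrder J] (Y : J →o Subobject X) {m : J}
    (hm : ∀ j, Y j ≤ Y m) : IsColimSubFamily Y (Y m) := by
  refine ⟨hm, ⟨{ desc s := s.ι.app m, fac s j := ?_, uniq s f hf := ?_ }⟩⟩
  · obtain ⟨k, hjk, hmk⟩ := directed_of (· ≤ ·) j m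
    rw [← s.w (homOfLE hjk), ← s.w (homOfLE hmk)]
    exact Subobject.ofLE_comp_ofLE_assoc _ _ _ _ _ _
  · simpa using hf m

lemma IsColimSubFamily.mono_desc (hW : IsColimSubFamily Y W) [HasColimit (monoDiagram Y)] :
    Mono (colimit.desc (monoDiagram Y) (monoCoconeToX Y)) := by
  obtain ⟨h, ⟨t⟩⟩ := hW
  have : colimit.desc (monoDiagram Y) (monoCoconeToX Y) =
      (colimit.isoColimitCocone ⟨_, t⟩).hom ≫ W.arrow := colimit.hom_ext fun j => by
    rw [colimit.ι_desc, colimit.isoColimitCocone_ι_hom_assoc]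
    simp
  rw [this]
  exact mono_comp _ _

lemma colimMap_monoNatTrans_desc (Z : J →o Subobject X) (h : ∀ j, Y j ≤ Z j)
    [HasColimit (monoDiagram Y)] [HasColimit (monoDiagram Z)] :
    colimMap (monoNatTrans Y Z h) ≫ colimit.desc (monoDiagram Z) (monoCoconeToX Z) =
      colimit.desc (monoDiagram Y) (monoCoconeToX Y) :=
  colimit.hom_ext fun j => by
    rw [ι_colimMap_assoc, colimit.ι_desc, colimit.ι_desc]
    simp

lemma IsColimSubFamily.of_cover {𝒟 : Set (Set J)} (hcov : ∀ j, ∃ D ∈ 𝒟, j ∈ D)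
    (W : 𝒟 →o Subobject X)
    (hW : ∀ D : 𝒟, IsColimSubFamily (Y.comp (OrderHom.Subtype.val (· ∈ D.1))) (W D))
    {V : Subobject X} (hV : IsColimSubFamily W V) : IsColimSubFamily Y V := by
  choose hYW tW using hW
  replace tW D := (tW D).some
  obtain ⟨hWV, ⟨tV⟩⟩ := hV
  have hYV (j : J) : Y j ≤ V := by
    obtain ⟨D, hD, hj⟩ := hcov j
    exact (hYW ⟨D, hD⟩ ⟨j, hj⟩).trans (hWV _)
  let restrict (s : Cocone (monoDiagram Y)) (D : 𝒟) :
      Cocone (monoDiagram (Y.comp (OrderHom.Subtype.val (· ∈ D.1)))) :=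
    s.whisker (OrderHom.Subtype.val _).monotone.functor
  have fac (s : Cocone (monoDiagram Y)) (D : 𝒟) (j : J) (hj : j ∈ D.1) :
      Subobject.ofLE (Y j) (W D) (hYW D ⟨j, hj⟩) ≫ (tW D).desc (restrict s D) = s.ι.app j :=
    (tW D).fac (restrict s D) ⟨j, hj⟩
  let glue (s : Cocone (monoDiagram Y)) : Cocone (monoDiagram W) :=
    { pt := s.pt
      ι :=
        { app D := (tW D).desc (restrict s D)
          naturality D E f := (tW D).hom_ext fun j => by
            show Subobject.ofLE (Y j.1) (W D) _ ≫ Subobject.ofLE _ _ _ ≫ _ =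
              Subobject.ofLE (Y j.1) (W D) _ ≫ _ ≫ 𝟙 _
            erw [Subobject.ofLE_comp_ofLE_assoc, Category.comp_id, fac s E j.1 (leOfHom f j.2),
              fac s D j.1 j.2] } }
  refine ⟨hYV, ⟨{ desc s := tV.desc (glue s), fac s j := ?_, uniq s f hf := ?_ }⟩⟩
  · obtain ⟨D, hD, hj⟩ := hcov j
    show Subobject.ofLE (Y j) V _ ≫ _ = _
    rw [← Subobject.ofLE_comp_ofLE (Y j) (W ⟨D, hD⟩) V (hYW ⟨D, hD⟩ ⟨j, hj⟩) (hWV _),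
      Category.assoc]
    erw [tV.fac (glue s) ⟨D, hD⟩]
    exact fac s ⟨D, hD⟩ j hj
  · refine tV.hom_ext fun D => (tW D).hom_ext fun j => ?_
    show Subobject.ofLE (Y j.1) (W D) _ ≫ Subobject.ofLE _ _ _ ≫ f =
      Subobject.ofLE (Y j.1) (W D) _ ≫ _
    erw [tV.fac (glue s) D, fac s D j.1 j.2, Subobject.ofLE_comp_ofLE_assoc]
    exact hf j.1

lemma IsColimSub.isColimSubFamily [IsDirectedOrder J] (hW : IsColimSub (Set.range Y) W) :
    IsColimSubFamily Y W := by
  obtain ⟨h, ⟨t⟩⟩ := hW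
  have hπ : Monotone (Set.rangeFactorization Y) := fun _ _ hab => Y.monotone hab
  have : hπ.functor.Final := hπ.final_functor_iff.2 fun ⟨_, j, rfl⟩ => ⟨j, le_rfl⟩
  exact ⟨fun j => h _ ⟨j, rfl⟩, ⟨(Functor.Final.isColimitWhiskerEquiv hπ.functor _).symm t⟩⟩

end Families

theorem JHS1.exists_isColimSubFamily [HasZeroMorphisms 𝒜] [HasZeroObject 𝒜] (h1 : JHS1 X)
    {J : Type*} [Preorder J] [IsDirectedOrder J] (Y : J →o Subobject X) :
    ∃ W, IsColimSubFamily Y W := by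
  suffices ∀ κ : Cardinal.{_}, ∀ (J : Type _) [Preorder J] [IsDirectedOrder J]
      (Y : J →o Subobject X), #J = κ → ∃ W, IsColimSubFamily Y W from this _ J Y rfl
  intro κ
  induction κ using Cardinal.lt_wf.induction with
  | _ κ ih =>
  rintro J _ _ Y rfl
  cases finite_or_infinite J
  · rcases isEmpty_or_nonempty J with hJ | hJ
    · exact ⟨⊥, isColimSubFamily_bot Y⟩
    · obtain ⟨m, hm⟩ := Finite.exists_le (id : J → J)
      exact ⟨Y m, isColimSubFamily_apply Y fun j => Y.monotone (hm j)⟩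
  obtain ⟨𝒟, hchain, hcov, hsmall⟩ := exists_isChain_cover_directedOn_mk_lt (J := J)
  have hW (D : 𝒟) : ∃ W, IsColimSubFamily (Y.comp (OrderHom.Subtype.val (· ∈ D.1))) W :=
    have := (hsmall D D.2).1.isDirectedOrder
    ih _ (hsmall D D.2).2 D.1 _ rfl
  choose W hW using hW
  let W' : 𝒟 →o Subobject X :=
    ⟨W, fun D E hDE => (hW D).le_of_forall_le fun j => (hW E).1 ⟨j.1, hDE j.2⟩⟩
  have : IsDirectedOrder 𝒟 := hchain.directedOn.isDirectedOrder
  have hΔ : IsPreChain (Set.range W') := by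
    rintro _ ⟨D, rfl⟩ _ ⟨E, rfl⟩ -
    exact (hchain.total D.2 E.2).imp (fun h => W'.monotone h) (fun h => W'.monotone h)
  obtain ⟨V, hV⟩ := h1 _ hΔ
  exact ⟨V, hV.isColimSubFamily.of_cover hcov W' hW⟩

lemma isColimSub_mk {Δ : Set (Subobject X)} [HasColimit (chainDiagram Δ)]
    (d : colimit (chainDiagram Δ) ⟶ X) [Mono d]
    (hd : ∀ Y : Δ, colimit.ι (chainDiagram Δ) Y ≫ d = Y.1.arrow) :
    IsColimSub Δ (Subobject.mk d) := by
  have hle (Y : Subobject X) (hY : Y ∈ Δ) : Y ≤ Subobject.mk d :=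
    Subobject.le_mk_of_comm (colimit.ι (chainDiagram Δ) ⟨Y, hY⟩) (hd ⟨Y, hY⟩)
  refine ⟨hle, ⟨(colimit.isColimit _).ofIsoColimit
    (Cocone.ext (Subobject.underlyingIso d).symm fun Y => ?_)⟩⟩
  show colimit.ι (chainDiagram Δ) Y ≫ (Subobject.underlyingIso d).inv =
    Subobject.ofLE Y.1 (Subobject.mk d) (hle Y.1 Y.2)
  refine (cancel_mono (Subobject.mk d).arrow).1 ?_
  simp only [Category.assoc, Subobject.underlyingIso_arrow, hd]
  exact (Subobject.ofLE_arrow _).symm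

lemma jhs1_of_cond1 (hex : ∀ Δ : Set (Subobject X), IsPreChain Δ → HasColimit (chainDiagram Δ))
    (h1 : Cond1 X hex) : JHS1 X := fun Δ hΔ =>
  have := hex Δ hΔ
  have : Mono (show colimit (chainDiagram Δ) ⟶ X from colimit.desc _ (coconeToX Δ)) := h1 Δ hΔ
  ⟨_, isColimSub_mk (colimit.desc _ (coconeToX Δ)) fun _ => colimit.ι_desc _ _⟩

variable [Abelian 𝒜]

lemma cond2_of_jhs1 (h1 : JHS1 X) : Cond2 X := by
  intro J _ _ Y Z h _ _
  obtain ⟨W, hW⟩ := h1.exists_isColimSubFamily Y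
  have := hW.mono_desc
  exact mono_of_mono_fac (colimMap_monoNatTrans_desc Z h)

lemma cond1_of_cond2 (hex : ∀ Δ : Set (Subobject X), IsPreChain Δ → HasColimit (chainDiagram Δ))
    (h2 : Cond2 X) : Cond1 X hex := by
  intro Δ hΔ
  let Y := OrderHom.Subtype.val (· ∈ Δ)
  have : HasColimit (monoDiagram Y) := hex Δ hΔ
  show Mono (colimit.desc (monoDiagram Y) (monoCoconeToX Y))
  rcases isEmpty_or_nonempty Δ with _ | ⟨⟨Y₀⟩⟩
  · exact (isColimSubFamily_bot Y).mono_desc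
  have hdir : IsDirectedOrder Δ := hΔ.directedOn.isDirectedOrder
  let Z := OrderHom.const Δ (⊤ : Subobject X)
  have hZ := isColimSubFamily_apply Z (m := Y₀) fun _ => le_rfl
  obtain ⟨_, ⟨t⟩⟩ := id hZ
  have : HasColimit (monoDiagram Z) := ⟨⟨⟨_, t⟩⟩⟩
  have := h2 Δ _ hdir Y Z (fun _ => le_top) inferInstance inferInstance
  have := hZ.mono_desc
  rw [← colimMap_monoNatTrans_desc Z fun _ => le_top]
  exact mono_comp _ _

lemma cond3_of_cond2 (h2 : Cond2 X) : Cond3 X := by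
  intro J _ hJ Y Z h W g hw hS hY hZ
  have := h2 J _ hJ Y Z h hY hZ
  exact exists_shortExact_colimMap _ g hw hS

lemma cond2_of_cond3 (h3 : Cond3 X) : Cond2 X := by
  intro J _ hJ Y Z h hY hZ
  let f := monoNatTrans Y Z h
  have : ∀ j, Mono (f.app j) := fun j => (inferInstance : Mono (Subobject.ofLE (Y j) (Z j) (h j)))
  have : Mono f := NatTrans.mono_of_mono_app f
  have hS : (ShortComplex.mk f (cokernel.π f) (cokernel.condition f)).ShortExact :=
    .mk' (ShortComplex.exact_of_g_is_cokernel _ (cokernelIsCokernel f)) inferInstance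
      inferInstance
  obtain ⟨_, _, hS'⟩ := h3 J _ hJ Y Z h (cokernel f) (cokernel.π f)
    (fun j => by rw [← NatTrans.comp_app, cokernel.condition]; rfl)
    (fun j => hS.map_of_exact ((evaluation J 𝒜).obj j)) hY hZ
  exact hS'.mono_f

theorem statement13_general (X : 𝒜)
    (hex : ∀ Δ : Set (Subobject X), IsPreChain Δ → HasColimit (chainDiagram Δ)) :
    (Cond1 X hex ↔ Cond2 X) ∧ (Cond2 X ↔ Cond3 X) :=
  ⟨⟨fun h1 => cond2_of_jhs1 (jhs1_of_cond1 hex h1), cond1_of_cond2 hex⟩,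
    cond3_of_cond2, cond2_of_cond3⟩

/-- Lemma 4.6: for an object all of whose pre-subobject chains have colimits in `𝒜`,
subobject cocompleteness is equivalent to colimits of directed systems in `Sub(X)` being
monomorphisms, and to exactness of colimits of directed systems of short exact sequences. -/
theorem statement13 [EssentiallySmall.{w} 𝒜] (X : 𝒜)
    (hex : ∀ Δ : Set (Subobject X), IsPreChain Δ → HasColimit (chainDiagram Δ)) :
    (Cond1 X hex ↔ Cond2 X) ∧ (Cond2 X ↔ Cond3 X) :=
  statement13_general X hex

end JHS
end
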